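/- Let H ∈ ℝ^{3×3} be a matrix and let a, b, c ∈ ℝ² be points with w_H(a) ≠ 0, w_H(b) ≠ 0 and w_H(c) ≠ 0. Then cross(f_H(a), f_H(b), f_H(c)) = det(H) · cross(a, b, c) / (w_H(a) · w_H(b) · w_H(c)). -/

import Mathlib

/-- The cross value of three points in the plane: the z-coordinate of the
cross product `(b - a) × (c - b)`. -/
noncomputable def cross (a b c : ℝ × ℝ) : ℝ :=
  (b.1 - a.1) * (c.2 - b.2) - (b.2 - a.2) * (c.1 - b.1)

/-- The lift of a planar point `(x, y)` to `(x, y, 1) ∈ ℝ³`. -/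
noncomputable def liftPt (p : ℝ × ℝ) : Fin 3 → ℝ := ![p.1, p.2, 1]

/-- The homography denominator: the third coordinate of `H ℓ(p)`. -/
noncomputable def wH (H : Matrix (Fin 3) (Fin 3) ℝ) (p : ℝ × ℝ) : ℝ :=
  H.mulVec (liftPt p) 2

/-- The planar homography induced by the matrix `H`. -/
noncomputable def fH (H : Matrix (Fin 3) (Fin 3) ℝ) (p : ℝ × ℝ) : ℝ × ℝ :=
  (H.mulVec (liftPt p) 0 / wH H p, H.mulVec (liftPt p) 1 / wH H p)

/-!
The cross value is the determinant of the matrix whose rows are the lifts `ℓ(a), ℓ(b), ℓ(c)`.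
Applying `H` to each row multiplies that determinant by `det H`; on the other hand
`H ℓ(p) = w_H(p) · ℓ(f_H(p))`, so pulling the scalars `w_H` out of the rows gives
`w_H(a) w_H(b) w_H(c) · cross(f_H a, f_H b, f_H c)`.
-/

open Matrix

theorem Matrix.det_of_mulVec {n R : Type*} [Fintype n] [DecidableEq n] [CommRing R]
    (H : Matrix n n R) (v : n → n → R) :
    det (of fun i => H *ᵥ v i) = det H * det (of v) := by
  have : of (fun i => H *ᵥ v i) = of v * Hᵀ := by
    ext i j
    simp only [of_apply, mulVec, dotProduct, mul_apply, transpose_apply, mul_comm]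
  rw [this, det_mul, det_transpose, mul_comm]

theorem cross_eq_det_liftPt (a b c : ℝ × ℝ) :
    cross a b c = det (of ![liftPt a, liftPt b, liftPt c]) := by
  simp [cross, liftPt, det_fin_three]
  ring

theorem mulVec_liftPt_eq_smul (H : Matrix (Fin 3) (Fin 3) ℝ) {p : ℝ × ℝ} (hp : wH H p ≠ 0) :
    H *ᵥ liftPt p = wH H p • liftPt (fH H p) := by
  ext i
  fin_cases i
  · exact (mul_div_cancel₀ _ hp).symm
  · exact (mul_div_cancel₀ _ hp).symm
  · exact (mul_one _).symm

theorem cross_fH (H : Matrix (Fin 3) (Fin 3) ℝ) (a b c : ℝ × ℝ)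
    (ha : wH H a ≠ 0) (hb : wH H b ≠ 0) (hc : wH H c ≠ 0) :
    cross (fH H a) (fH H b) (fH H c) =
      H.det * cross a b c / (wH H a * wH H b * wH H c) := by
  have hrows : of (fun i => H *ᵥ ![liftPt a, liftPt b, liftPt c] i) =
      of fun i j => ![wH H a, wH H b, wH H c] i *
        of ![liftPt (fH H a), liftPt (fH H b), liftPt (fH H c)] i j := by
    ext i : 1
    fin_cases i <;> simp [mulVec_liftPt_eq_smul, ha, hb, hc]
  have hdet : H.det * cross a b c = wH H a * wH H b * wH H c * cross (fH H a) (fH H b) (fH H c) :=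
    calc H.det * cross a b c = det (of fun i => H *ᵥ ![liftPt a, liftPt b, liftPt c] i) := by
          rw [det_of_mulVec, cross_eq_det_liftPt]
      _ = _ := by rw [hrows, det_mul_column, Fin.prod_univ_three, cross_eq_det_liftPt]; rfl
  rw [hdet, mul_div_cancel_left₀ _ (mul_ne_zero (mul_ne_zero ha hb) hc)]
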